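/- Let m ≥ 1 be an integer and let β₁, …, β_d be nonzero real affine functions on ℝ^m. For every differential operator D with polynomial coefficients on ℝ^m there exists a finite family D'₁, …, D'_k of differential operators with polynomial coefficients on ℝ^m such that, for every smooth function h : ℝ^m → ℝ, one has sup_{y ∈ ℝ^m} |Dh(y)| ≤ ∑_{l=1}^{k} sup_{y ∈ ℝ^m} |D'_l H(y)|, where H : ℝ^m → ℝ is the function H(y) := h(y) ∏_{b=1}^{d} β_b(y). -/

import Mathlib

open scoped ENNReal NNReal ContDiff
open MvPolynomial Set

noncomputable def pderivE (m : ℕ) (i : Fin m) (f : (Fin m → ℝ) → ℝ) : (Fin m → ℝ) → ℝ :=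
  fun x => fderiv ℝ f x (Pi.single i 1)

noncomputable def pderivPow (m : ℕ) (i : Fin m) : ℕ → ((Fin m → ℝ) → ℝ) → ((Fin m → ℝ) → ℝ)
  | 0 => id
  | n + 1 => fun f => pderivE m i (pderivPow m i n f)

noncomputable def pderivMulti (m : ℕ) (β : Fin m → ℕ) (f : (Fin m → ℝ) → ℝ) :
    (Fin m → ℝ) → ℝ :=
  (List.finRange m).foldr (fun i g => pderivPow m i (β i) g) f

noncomputable def applyDiffOp (m : ℕ) (D : (Fin m → ℕ) →₀ MvPolynomial (Fin m) ℝ)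
    (h : (Fin m → ℝ) → ℝ) : (Fin m → ℝ) → ℝ :=
  fun x => ∑ β ∈ D.support, MvPolynomial.eval x (D β) * pderivMulti m β h x

namespace S19
variable {m : ℕ}

/-- derivative along a vector -/
noncomputable def dvec (m : ℕ) (v : Fin m → ℝ) (f : (Fin m → ℝ) → ℝ) : (Fin m → ℝ) → ℝ :=
  fun x => fderiv ℝ f x v

lemma contDiff_dvec {f : (Fin m → ℝ) → ℝ} (hf : ContDiff ℝ ∞ f) (v : Fin m → ℝ) :
    ContDiff ℝ ∞ (dvec m v f) := by
  have h1 : ContDiff ℝ ∞ (fun x => fderiv ℝ f x) := hf.fderiv_right (by simp)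
  exact (ContinuousLinearMap.apply ℝ ℝ v).contDiff.comp h1

lemma contDiff_pderivE {f : (Fin m → ℝ) → ℝ} (hf : ContDiff ℝ ∞ f) (i : Fin m) :
    ContDiff ℝ ∞ (pderivE m i f) := contDiff_dvec hf _

lemma contDiff_pderivPow {f : (Fin m → ℝ) → ℝ} (hf : ContDiff ℝ ∞ f) (i : Fin m) (n : ℕ) :
    ContDiff ℝ ∞ (pderivPow m i n f) := by
  induction n with
  | zero => exact hf
  | succ n ih => exact contDiff_pderivE ih i

lemma contDiff_pderivMulti {f : (Fin m → ℝ) → ℝ} (hf : ContDiff ℝ ∞ f) (β : Fin m → ℕ) :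
    ContDiff ℝ ∞ (pderivMulti m β f) := by
  unfold pderivMulti
  induction (List.finRange m) with
  | nil => exact hf
  | cons i l ih => exact contDiff_pderivPow ih i (β i)

lemma dvec_eq_sum {f : (Fin m → ℝ) → ℝ} (v : Fin m → ℝ) (x : Fin m → ℝ) :
    dvec m v f x = ∑ i, v i * pderivE m i f x := by
  have : v = ∑ i, v i • (Pi.single i 1 : Fin m → ℝ) := by
    ext j; simp [Finset.sum_apply, Pi.single_apply, eq_comm]
  rw [dvec]
  nth_rewrite 1 [this]
  rw [map_sum]
  simp [pderivE]

lemma dvec_add {f g : (Fin m → ℝ) → ℝ} (v : Fin m → ℝ) (x : Fin m → ℝ)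
    (hf : DifferentiableAt ℝ f x) (hg : DifferentiableAt ℝ g x) :
    dvec m v (fun y => f y + g y) x = dvec m v f x + dvec m v g x := by
  simp only [dvec]
  rw [fderiv_fun_add hf hg]; simp

lemma dvec_mul {f g : (Fin m → ℝ) → ℝ} (v : Fin m → ℝ) (x : Fin m → ℝ)
    (hf : DifferentiableAt ℝ f x) (hg : DifferentiableAt ℝ g x) :
    dvec m v (fun y => f y * g y) x = dvec m v f x * g x + f x * dvec m v g x := by
  simp only [dvec]
  rw [fderiv_fun_mul hf hg]
  simp only [ContinuousLinearMap.add_apply, ContinuousLinearMap.smul_apply, smul_eq_mul]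
  ring

lemma dvec_const_mul {f : (Fin m → ℝ) → ℝ} (c : ℝ) (v : Fin m → ℝ) (x : Fin m → ℝ)
    (hf : DifferentiableAt ℝ f x) :
    dvec m v (fun y => c * f y) x = c * dvec m v f x := by
  simp only [dvec]
  rw [fderiv_const_mul hf]; simp

/-- evaluation of a polynomial as a function -/
noncomputable def evalP (m : ℕ) (p : MvPolynomial (Fin m) ℝ) : (Fin m → ℝ) → ℝ :=
  fun x => eval x p

lemma contDiff_evalP (p : MvPolynomial (Fin m) ℝ) : ContDiff ℝ ∞ (evalP m p) := by
  induction p using MvPolynomial.induction_on with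
  | C a =>
    have h0 : evalP m (C a : MvPolynomial (Fin m) ℝ) = fun _ => a := by
      funext y; simp [evalP]
    rw [h0]; exact contDiff_const
  | add p q hp hq =>
    have h0 : evalP m (p + q) = fun y => evalP m p y + evalP m q y := by
      funext y; simp [evalP]
    rw [h0]; exact hp.add hq
  | mul_X p j hp =>
    have h0 : evalP m (p * X j) = fun y => evalP m p y * y j := by
      funext y; simp [evalP]
    have h1 : ContDiff ℝ ∞ (fun x : Fin m → ℝ => x j) :=
      (ContinuousLinearMap.proj j : (Fin m → ℝ) →L[ℝ] ℝ).contDiff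
    rw [h0]; exact hp.mul h1

lemma diffAt_evalP (p : MvPolynomial (Fin m) ℝ) (x : Fin m → ℝ) :
    DifferentiableAt ℝ (evalP m p) x :=
  ((contDiff_evalP p).differentiable (by simp)).differentiableAt

lemma pderivE_evalP (p : MvPolynomial (Fin m) ℝ) (i : Fin m) :
    pderivE m i (evalP m p) = evalP m (pderiv i p) := by
  induction p using MvPolynomial.induction_on with
  | C a =>
    funext x
    have : (evalP m (C a : MvPolynomial (Fin m) ℝ)) = fun _ => a := by
      funext y; simp [evalP]
    rw [this]
    simp [pderivE, evalP]
  | add p q hp hq =>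
    funext x
    have h1 : evalP m (p + q) = fun y => evalP m p y + evalP m q y := by
      funext y; simp [evalP]
    rw [h1]
    have := dvec_add (m := m) (Pi.single i 1) x (diffAt_evalP p x) (diffAt_evalP q x)
    simp only [dvec] at this
    simp only [pderivE, this]
    have := congrFun hp x
    have := congrFun hq x
    simp only [pderivE] at *
    simp [evalP, *]
  | mul_X p j hp =>
    funext x
    have h1 : evalP m (p * X j) = fun y => evalP m p y * y j := by
      funext y; simp [evalP]
    have hproj : DifferentiableAt ℝ (fun y : Fin m → ℝ => y j) x :=
      ((ContinuousLinearMap.proj j : (Fin m → ℝ) →L[ℝ] ℝ)).differentiableAt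
    rw [h1]
    have h2 := dvec_mul (m := m) (Pi.single i 1) x (diffAt_evalP p x) hproj
    simp only [dvec] at h2
    simp only [pderivE] at h2 ⊢
    rw [h2]
    have h3 : fderiv ℝ (fun y : Fin m → ℝ => y j) x (Pi.single i 1) = (Pi.single i 1 : Fin m → ℝ) j := by
      have : (fun y : Fin m → ℝ => y j) = (ContinuousLinearMap.proj j : (Fin m → ℝ) →L[ℝ] ℝ) := rfl
      rw [this, ContinuousLinearMap.fderiv]
      rfl
    rw [h3]
    have h4 := congrFun hp x
    simp only [pderivE] at h4
    rw [h4]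
    simp only [evalP, pderiv_mul, pderiv_X]
    simp [Pi.single_apply]
    ring_nf
    rcases eq_or_ne j i with h | h <;> simp [h] <;> ring

lemma applyDiffOp_eq_sum (D : (Fin m → ℕ) →₀ MvPolynomial (Fin m) ℝ)
    (h : (Fin m → ℝ) → ℝ) (x : Fin m → ℝ) {s : Finset (Fin m → ℕ)} (hs : D.support ⊆ s) :
    applyDiffOp m D h x = ∑ β ∈ s, eval x (D β) * pderivMulti m β h x := by
  rw [applyDiffOp, Finset.sum_subset hs]
  intro β _ hβ
  simp [Finsupp.notMem_support_iff.1 hβ]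

lemma applyDiffOp_add (D D' : (Fin m → ℕ) →₀ MvPolynomial (Fin m) ℝ)
    (h : (Fin m → ℝ) → ℝ) (x : Fin m → ℝ) :
    applyDiffOp m (D + D') h x = applyDiffOp m D h x + applyDiffOp m D' h x := by
  rw [applyDiffOp_eq_sum (D + D') h x (Finsupp.support_add (g₁ := D) (g₂ := D')),
    applyDiffOp_eq_sum D h x (Finset.subset_union_left),
    applyDiffOp_eq_sum D' h x (Finset.subset_union_right), ← Finset.sum_add_distrib]
  congr 1; funext β
  simp [add_mul]

lemma applyDiffOp_smul (c : ℝ) (D : (Fin m → ℕ) →₀ MvPolynomial (Fin m) ℝ)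
    (h : (Fin m → ℝ) → ℝ) (x : Fin m → ℝ) :
    applyDiffOp m (c • D) h x = c * applyDiffOp m D h x := by
  rw [applyDiffOp_eq_sum (c • D) h x (Finsupp.support_smul (b := c) (g := D)),
    applyDiffOp, Finset.mul_sum]
  congr 1; funext β
  simp [Finsupp.smul_apply, smul_eq_C_mul]
  ring

lemma applyDiffOp_sub (D D' : (Fin m → ℕ) →₀ MvPolynomial (Fin m) ℝ)
    (h : (Fin m → ℝ) → ℝ) (x : Fin m → ℝ) :
    applyDiffOp m (D - D') h x = applyDiffOp m D h x - applyDiffOp m D' h x := by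
  have : D = (D - D') + D' := by abel
  nth_rewrite 2 [this]
  rw [applyDiffOp_add]; ring

lemma applyDiffOp_single (β : Fin m → ℕ) (p : MvPolynomial (Fin m) ℝ)
    (h : (Fin m → ℝ) → ℝ) (x : Fin m → ℝ) :
    applyDiffOp m (Finsupp.single β p) h x = eval x p * pderivMulti m β h x := by
  rcases eq_or_ne p 0 with rfl | hp
  · simp [applyDiffOp]
  · rw [applyDiffOp, Finsupp.support_single_ne_zero _ hp]
    simp

lemma applyDiffOp_finset_sum {ι : Type*} [DecidableEq ι] (s : Finset ι)
    (D : ι → ((Fin m → ℕ) →₀ MvPolynomial (Fin m) ℝ))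
    (h : (Fin m → ℝ) → ℝ) (x : Fin m → ℝ) :
    applyDiffOp m (∑ i ∈ s, D i) h x = ∑ i ∈ s, applyDiffOp m (D i) h x := by
  induction s using Finset.induction_on with
  | empty => simp [applyDiffOp]
  | insert _ _ hi ih =>
    rw [Finset.sum_insert hi, Finset.sum_insert hi, applyDiffOp_add, ih]

lemma contDiff_applyDiffOp (D : (Fin m → ℕ) →₀ MvPolynomial (Fin m) ℝ)
    {h : (Fin m → ℝ) → ℝ} (hh : ContDiff ℝ ∞ h) :
    ContDiff ℝ ∞ (applyDiffOp m D h) := by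
  have : applyDiffOp m D h = fun x => ∑ β ∈ D.support, evalP m (D β) x * pderivMulti m β h x :=
    rfl
  rw [this]
  apply ContDiff.sum
  intro β _
  exact (contDiff_evalP (D β)).mul (contDiff_pderivMulti hh β)

lemma pderivE_comm {f : (Fin m → ℝ) → ℝ} (hf : ContDiff ℝ ∞ f) (i j : Fin m) :
    pderivE m i (pderivE m j f) = pderivE m j (pderivE m i f) := by
  funext x
  have hsymm : IsSymmSndFDerivAt ℝ f x :=
    hf.contDiffAt.isSymmSndFDerivAt (by simp; exact WithTop.coe_le_coe.2 le_top)
  have hf' : ContDiff ℝ ∞ (fun y => fderiv ℝ f y) := hf.fderiv_right (by simp)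
  have hdf : DifferentiableAt ℝ (fun y => fderiv ℝ f y) x :=
    (hf'.differentiable (by simp)).differentiableAt
  have key : ∀ w v : Fin m → ℝ,
      fderiv ℝ (fun y => fderiv ℝ f y w) x v = fderiv ℝ (fderiv ℝ f) x v w := by
    intro w v
    have h1 : HasFDerivAt (fun y => fderiv ℝ f y) (fderiv ℝ (fderiv ℝ f) x) x :=
      hdf.hasFDerivAt
    have h2 : HasFDerivAt (fun y => fderiv ℝ f y w)
        ((ContinuousLinearMap.apply ℝ ℝ w).comp (fderiv ℝ (fderiv ℝ f) x)) x :=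
      (ContinuousLinearMap.apply ℝ ℝ w).hasFDerivAt.comp x h1
    rw [h2.fderiv]
    rfl
  show fderiv ℝ (fun y => fderiv ℝ f y (Pi.single j 1)) x (Pi.single i 1) =
    fderiv ℝ (fun y => fderiv ℝ f y (Pi.single i 1)) x (Pi.single j 1)
  rw [key, key]
  exact hsymm.eq _ _

lemma pderivE_pderivPow_comm {g : (Fin m → ℝ) → ℝ} (hg : ContDiff ℝ ∞ g)
    (i j : Fin m) (n : ℕ) :
    pderivE m i (pderivPow m j n g) = pderivPow m j n (pderivE m i g) := by
  induction n with
  | zero => rfl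
  | succ n ih =>
    show pderivE m i (pderivE m j (pderivPow m j n g)) = _
    rw [pderivE_comm (contDiff_pderivPow hg j n) i j, ih]
    rfl

lemma foldD_congr (l : List (Fin m)) (β β' : Fin m → ℕ) (u : (Fin m → ℝ) → ℝ)
    (hβ : ∀ j ∈ l, β j = β' j) :
    l.foldr (fun j g => pderivPow m j (β j) g) u =
      l.foldr (fun j g => pderivPow m j (β' j) g) u := by
  induction l with
  | nil => rfl
  | cons j l ih =>
    simp only [List.foldr_cons]
    rw [hβ j (by simp), ih (fun j' hj' => hβ j' (by simp [hj']))]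

lemma contDiff_foldD (l : List (Fin m)) (β : Fin m → ℕ) {u : (Fin m → ℝ) → ℝ}
    (hu : ContDiff ℝ ∞ u) :
    ContDiff ℝ ∞ (l.foldr (fun j g => pderivPow m j (β j) g) u) := by
  induction l with
  | nil => exact hu
  | cons j l ih => exact contDiff_pderivPow ih j (β j)

lemma pderivE_foldD (i : Fin m) (l : List (Fin m)) (β : Fin m → ℕ)
    {u : (Fin m → ℝ) → ℝ} (hu : ContDiff ℝ ∞ u) (hil : i ∈ l) (hnd : l.Nodup) :
    pderivE m i (l.foldr (fun j g => pderivPow m j (β j) g) u) =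
      l.foldr (fun j g => pderivPow m j ((β + Pi.single i 1 : Fin m → ℕ) j) g) u := by
  induction l with
  | nil => simp at hil
  | cons j l ih =>
    simp only [List.foldr_cons]
    rcases eq_or_ne i j with rfl | hij
    · have hinl : i ∉ l := (List.nodup_cons.1 hnd).1
      have h1 : l.foldr (fun j g => pderivPow m j ((β + Pi.single i 1 : Fin m → ℕ) j) g) u =
          l.foldr (fun j g => pderivPow m j (β j) g) u := by
        apply foldD_congr
        intro j' hj'
        have : j' ≠ i := fun h => hinl (h ▸ hj')
        simp [Pi.single_apply, this.symm]
      rw [h1]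
      have h2 : (β + Pi.single i 1 : Fin m → ℕ) i = β i + 1 := by simp
      rw [h2]
      rfl
    · rcases List.mem_cons.1 hil with h | h
      · exact absurd h hij
      · have h2 : (β + Pi.single i 1 : Fin m → ℕ) j = β j := by
          simp [Pi.single_apply, hij.symm]
        rw [h2, pderivE_pderivPow_comm (contDiff_foldD l β hu) i j (β j),
          ih h (List.nodup_cons.1 hnd).2]

lemma pderivE_pderivMulti (i : Fin m) (β : Fin m → ℕ) {u : (Fin m → ℝ) → ℝ}
    (hu : ContDiff ℝ ∞ u) :
    pderivE m i (pderivMulti m β u) = pderivMulti m (β + Pi.single i 1 : _) u := by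
  exact pderivE_foldD i (List.finRange m) β hu (List.mem_finRange i) (List.nodup_finRange m)

lemma dvec_finset_sum {ι : Type*} (s : Finset ι) (F : ι → ((Fin m → ℝ) → ℝ))
    (v x : Fin m → ℝ) (hF : ∀ i ∈ s, DifferentiableAt ℝ (F i) x) :
    dvec m v (fun y => ∑ i ∈ s, F i y) x = ∑ i ∈ s, dvec m v (F i) x := by
  simp only [dvec]
  rw [fderiv_fun_sum hF]
  simp

/-- the Finsupp-level operator corresponding to post-composition with `dvec v` -/
noncomputable def dOpV (v : Fin m → ℝ) (E : (Fin m → ℕ) →₀ MvPolynomial (Fin m) ℝ) :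
    (Fin m → ℕ) →₀ MvPolynomial (Fin m) ℝ :=
  ∑ β ∈ E.support, (Finsupp.single β (∑ i, v i • pderiv i (E β)) +
    ∑ i, v i • Finsupp.single (β + Pi.single i 1 : Fin m → ℕ) (E β))

lemma dvec_evalP (v : Fin m → ℝ) (p : MvPolynomial (Fin m) ℝ) (x : Fin m → ℝ) :
    dvec m v (evalP m p) x = evalP m (∑ i, v i • pderiv i p) x := by
  rw [dvec_eq_sum]
  have : ∀ i : Fin m, pderivE m i (evalP m p) x = evalP m (pderiv i p) x := by
    intro i; rw [pderivE_evalP]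
  simp only [this]
  simp [evalP, map_sum, smul_eq_C_mul]

lemma applyDiffOp_dOpV (v : Fin m → ℝ) (E : (Fin m → ℕ) →₀ MvPolynomial (Fin m) ℝ)
    {u : (Fin m → ℝ) → ℝ} (hu : ContDiff ℝ ∞ u) (x : Fin m → ℝ) :
    applyDiffOp m (dOpV v E) u x = dvec m v (applyDiffOp m E u) x := by
  have hterm : ∀ β : Fin m → ℕ, DifferentiableAt ℝ
      (fun y => evalP m (E β) y * pderivMulti m β u y) x := by
    intro β
    exact (diffAt_evalP (E β) x).mul
      (((contDiff_pderivMulti hu β).differentiable (by simp)).differentiableAt)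
  have hR : dvec m v (applyDiffOp m E u) x =
      ∑ β ∈ E.support, dvec m v (fun y => evalP m (E β) y * pderivMulti m β u y) x := by
    have : applyDiffOp m E u = fun y => ∑ β ∈ E.support,
        evalP m (E β) y * pderivMulti m β u y := rfl
    rw [this, dvec_finset_sum _ _ _ _ (fun β _ => hterm β)]
  rw [hR, dOpV, applyDiffOp_finset_sum]
  apply Finset.sum_congr rfl
  intro β _
  rw [applyDiffOp_add, applyDiffOp_single, applyDiffOp_finset_sum]
  have hL2 : ∀ i : Fin m, applyDiffOp m (v i • Finsupp.single
      (β + Pi.single i 1 : Fin m → ℕ) (E β)) u x =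
      v i * (evalP m (E β) x * pderivMulti m (β + Pi.single i 1 : _) u x) := by
    intro i
    rw [applyDiffOp_smul, applyDiffOp_single]; rfl
  simp only [hL2]
  rw [dvec_mul _ _ (diffAt_evalP (E β) x)
    (((contDiff_pderivMulti hu β).differentiable (by simp)).differentiableAt),
    dvec_evalP, dvec_eq_sum]
  have : ∀ i : Fin m, pderivE m i (pderivMulti m β u) x =
      pderivMulti m (β + Pi.single i 1 : _) u x := by
    intro i; rw [pderivE_pderivMulti i β hu]
  simp only [this]
  rw [Finset.mul_sum]
  congr 1
  apply Finset.sum_congr rfl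
  intro i _
  ring

/-- iterated `dvec` -/
noncomputable def dvecPowF (v : Fin m → ℝ) : ℕ → ((Fin m → ℝ) → ℝ) → ((Fin m → ℝ) → ℝ)
  | 0 => id
  | k + 1 => fun f => dvec m v (dvecPowF v k f)

lemma contDiff_dvecPowF {f : (Fin m → ℝ) → ℝ} (hf : ContDiff ℝ ∞ f) (v : Fin m → ℝ) (k : ℕ) :
    ContDiff ℝ ∞ (dvecPowF v k f) := by
  induction k with
  | zero => exact hf
  | succ k ih => exact contDiff_dvec ih v

lemma applyDiffOp_dOpV_iter (v : Fin m → ℝ) (E : (Fin m → ℕ) →₀ MvPolynomial (Fin m) ℝ)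
    {u : (Fin m → ℝ) → ℝ} (hu : ContDiff ℝ ∞ u) (k : ℕ) :
    applyDiffOp m ((dOpV v)^[k] E) u = dvecPowF v k (applyDiffOp m E u) := by
  induction k with
  | zero => rfl
  | succ k ih =>
    rw [Function.iterate_succ_apply']
    show applyDiffOp m (dOpV v ((dOpV v)^[k] E)) u = dvec m v (dvecPowF v k (applyDiffOp m E u))
    funext x
    rw [applyDiffOp_dOpV v _ hu x, ih]

lemma pderivE_add' {u w : (Fin m → ℝ) → ℝ} (hu : ContDiff ℝ ∞ u) (hw : ContDiff ℝ ∞ w)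
    (i : Fin m) :
    pderivE m i (fun x => u x + w x) = fun x => pderivE m i u x + pderivE m i w x := by
  funext x
  exact dvec_add _ x ((hu.differentiable (by simp)).differentiableAt)
    ((hw.differentiable (by simp)).differentiableAt)

lemma pderivE_const_mul' {u : (Fin m → ℝ) → ℝ} (hu : ContDiff ℝ ∞ u) (c : ℝ) (i : Fin m) :
    pderivE m i (fun x => c * u x) = fun x => c * pderivE m i u x := by
  funext x
  exact dvec_const_mul c _ x ((hu.differentiable (by simp)).differentiableAt)

lemma pderivPow_add' {u w : (Fin m → ℝ) → ℝ} (hu : ContDiff ℝ ∞ u) (hw : ContDiff ℝ ∞ w)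
    (i : Fin m) (n : ℕ) :
    pderivPow m i n (fun x => u x + w x) = fun x => pderivPow m i n u x + pderivPow m i n w x := by
  induction n with
  | zero => rfl
  | succ n ih =>
    show pderivE m i (pderivPow m i n fun x => u x + w x) = _
    rw [ih, pderivE_add' (contDiff_pderivPow hu i n) (contDiff_pderivPow hw i n)]
    rfl

lemma pderivPow_const_mul' {u : (Fin m → ℝ) → ℝ} (hu : ContDiff ℝ ∞ u) (c : ℝ)
    (i : Fin m) (n : ℕ) :
    pderivPow m i n (fun x => c * u x) = fun x => c * pderivPow m i n u x := by
  induction n with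
  | zero => rfl
  | succ n ih =>
    show pderivE m i (pderivPow m i n fun x => c * u x) = _
    rw [ih, pderivE_const_mul' (contDiff_pderivPow hu i n) c]
    rfl

section Affine

variable (L : (Fin m → ℝ) →ₗ[ℝ] ℝ) (c : ℝ)

/-- an affine function -/
def aff (L : (Fin m → ℝ) →ₗ[ℝ] ℝ) (c : ℝ) : (Fin m → ℝ) → ℝ := fun y => L y + c

lemma contDiff_aff : ContDiff ℝ ∞ (aff L c) := by
  have : ContDiff ℝ ∞ (fun y : Fin m → ℝ => L y) :=
    (LinearMap.toContinuousLinearMap L).contDiff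
  exact this.add contDiff_const

lemma hasFDerivAt_aff (x : Fin m → ℝ) :
    HasFDerivAt (aff L c) (LinearMap.toContinuousLinearMap L) x := by
  have h1 : HasFDerivAt (fun y : Fin m → ℝ => L y) (LinearMap.toContinuousLinearMap L) x :=
    (LinearMap.toContinuousLinearMap L).hasFDerivAt
  exact h1.add_const c

lemma dvec_aff (v x : Fin m → ℝ) : dvec m v (aff L c) x = L v := by
  rw [dvec, (hasFDerivAt_aff L c x).fderiv]
  rfl

lemma pderivE_aff (i : Fin m) : pderivE m i (aff L c) = fun _ => L (Pi.single i 1) := by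
  funext x
  exact dvec_aff L c _ x

lemma pderivPow_aff {g : (Fin m → ℝ) → ℝ} (hg : ContDiff ℝ ∞ g) (i : Fin m) (n : ℕ) :
    pderivPow m i n (fun x => aff L c x * g x) = fun x =>
      aff L c x * pderivPow m i n g x +
        (n : ℝ) * L (Pi.single i 1) * pderivPow m i (n - 1) g x := by
  induction n with
  | zero => funext x; simp [pderivPow]
  | succ n ih =>
    show pderivE m i (pderivPow m i n fun x => aff L c x * g x) = _
    rw [ih]
    have hPn : ContDiff ℝ ∞ (pderivPow m i n g) := contDiff_pderivPow hg i n
    have hQ : ContDiff ℝ ∞ (pderivPow m i (n - 1) g) := contDiff_pderivPow hg i (n - 1)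
    have h1 : ContDiff ℝ ∞ (fun x => aff L c x * pderivPow m i n g x) :=
      (contDiff_aff L c).mul hPn
    have h2 : ContDiff ℝ ∞ (fun x => ((n : ℝ) * L (Pi.single i 1)) * pderivPow m i (n - 1) g x) :=
      contDiff_const.mul hQ
    have e0 : (fun x => aff L c x * pderivPow m i n g x +
        (n : ℝ) * L (Pi.single i 1) * pderivPow m i (n - 1) g x) =
        (fun x => aff L c x * pderivPow m i n g x +
        ((n : ℝ) * L (Pi.single i 1)) * pderivPow m i (n - 1) g x) := by
      funext x; ring
    rw [e0, pderivE_add' h1 h2 i, pderivE_const_mul' hQ _ i]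
    funext x
    have e1 : pderivE m i (fun x => aff L c x * pderivPow m i n g x) x =
        L (Pi.single i 1) * pderivPow m i n g x + aff L c x * pderivPow m i (n + 1) g x := by
      have := dvec_mul (m := m) (Pi.single i 1) x
        (((contDiff_aff L c).differentiable (by simp)).differentiableAt)
        ((hPn.differentiable (by simp)).differentiableAt)
      show dvec m (Pi.single i 1) _ x = _
      rw [this, dvec_aff]
      rfl
    rw [e1]
    beta_reduce
    rcases Nat.eq_zero_or_pos n with rfl | hn
    · push_cast
      ring
    · have hn1 : n - 1 + 1 = n := Nat.succ_pred_eq_of_pos hn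
      have e2 : pderivE m i (pderivPow m i (n - 1) g) x = pderivPow m i n g x := by
        conv_rhs => rw [← hn1]
        rfl
      rw [e2, Nat.add_sub_cancel]
      push_cast
      ring

lemma pderivPow_finset_sum {ι : Type*} (s : Finset ι) (F : ι → ((Fin m → ℝ) → ℝ))
    (hF : ∀ i ∈ s, ContDiff ℝ ∞ (F i)) (j : Fin m) (n : ℕ) :
    pderivPow m j n (fun x => ∑ i ∈ s, F i x) = fun x => ∑ i ∈ s, pderivPow m j n (F i) x := by
  classical
  induction s using Finset.induction_on with
  | empty =>
    simp only [Finset.sum_empty]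
    rw [show (fun _ : Fin m → ℝ => (0:ℝ)) = (fun x : Fin m → ℝ => (0:ℝ) * (0:ℝ)) by
      funext; ring, pderivPow_const_mul' contDiff_const 0 j n]
    funext x; ring
  | @insert a s' ha ih =>
    have hFa : ContDiff ℝ ∞ (F a) := hF a (by simp)
    have hFs : ContDiff ℝ ∞ (fun x => ∑ i ∈ s', F i x) :=
      ContDiff.sum (fun i hi => hF i (by simp [hi]))
    simp only [Finset.sum_insert ha]
    rw [pderivPow_add' hFa hFs j n, ih (fun i hi => hF i (by simp [hi]))]

lemma foldD_aff (l : List (Fin m)) (hnd : l.Nodup) (β : Fin m → ℕ)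
    {g : (Fin m → ℝ) → ℝ} (hg : ContDiff ℝ ∞ g) :
    l.foldr (fun j u => pderivPow m j (β j) u) (fun x => aff L c x * g x) = fun x =>
      aff L c x * l.foldr (fun j u => pderivPow m j (β j) u) g x +
      ∑ i ∈ l.toFinset, (β i : ℝ) * L (Pi.single i 1) *
        l.foldr (fun j u => pderivPow m j (Function.update β i (β i - 1) j) u) g x := by
  classical
  induction l with
  | nil => simp
  | cons j l ih =>
    have hj : j ∉ l := (List.nodup_cons.1 hnd).1
    have hndl : l.Nodup := (List.nodup_cons.1 hnd).2
    simp only [List.foldr_cons]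
    rw [ih hndl]
    set A := l.foldr (fun j u => pderivPow m j (β j) u) g with hA
    have hAc : ContDiff ℝ ∞ A := contDiff_foldD l β hg
    set S := fun x => ∑ i ∈ l.toFinset, (β i : ℝ) * L (Pi.single i 1) *
        l.foldr (fun j u => pderivPow m j (Function.update β i (β i - 1) j) u) g x with hS
    have hSc : ContDiff ℝ ∞ S := by
      apply ContDiff.sum
      intro i _
      exact contDiff_const.mul (contDiff_foldD l _ hg)
    have h1 : (fun x => aff L c x * A x + S x) =
        fun x => (fun y => aff L c y * A y) x + S x := rfl
    rw [h1, pderivPow_add' ((contDiff_aff L c).mul hAc) hSc j (β j),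
      pderivPow_aff L c hAc j (β j)]
    have h2 : pderivPow m j (β j) S = fun x => ∑ i ∈ l.toFinset, (β i : ℝ) * L (Pi.single i 1) *
        pderivPow m j (β j) (l.foldr (fun j' u =>
          pderivPow m j' (Function.update β i (β i - 1) j') u) g) x := by
      rw [hS, pderivPow_finset_sum l.toFinset _
        (fun i _ => contDiff_const.mul (contDiff_foldD l _ hg)) j (β j)]
      funext x
      congr 1
      funext i
      rw [pderivPow_const_mul' (contDiff_foldD l _ hg) _ j (β j)]
    rw [h2]
    funext x
    have htf : (j :: l).toFinset = insert j l.toFinset := by simp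
    rw [htf, Finset.sum_insert (by simpa using hj)]
    have hinner : l.foldr (fun j' u => pderivPow m j' (Function.update β j (β j - 1) j') u) g
        = A := by
      rw [hA]
      apply foldD_congr
      intro j' hj'
      have : j' ≠ j := fun h => hj (h ▸ hj')
      rw [Function.update_of_ne this]
    have e3 : Function.update β j (β j - 1) j = β j - 1 := Function.update_self _ _ _
    rw [e3, hinner]
    have e5 : ∀ i ∈ l.toFinset, ((β i : ℝ) * L (Pi.single i 1) *
        pderivPow m j (Function.update β i (β i - 1) j)
          (l.foldr (fun j' u => pderivPow m j' (Function.update β i (β i - 1) j') u) g) x)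
        = (β i : ℝ) * L (Pi.single i 1) *
        pderivPow m j (β j) (l.foldr (fun j' u =>
          pderivPow m j' (Function.update β i (β i - 1) j') u) g) x := by
      intro i hi
      have hij : i ≠ j := fun h => hj (h ▸ List.mem_toFinset.1 hi)
      rw [Function.update_of_ne hij.symm]
    rw [Finset.sum_congr rfl e5]
    beta_reduce
    ring

lemma pderivMulti_aff (β : Fin m → ℕ) {g : (Fin m → ℝ) → ℝ} (hg : ContDiff ℝ ∞ g) :
    pderivMulti m β (fun x => aff L c x * g x) = fun x =>
      aff L c x * pderivMulti m β g x +
      ∑ i : Fin m, (β i : ℝ) * L (Pi.single i 1) *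
        pderivMulti m (Function.update β i (β i - 1)) g x := by
  have h := foldD_aff L c (List.finRange m) (List.nodup_finRange m) β hg
  have htf : (List.finRange m).toFinset = Finset.univ := by
    ext i; simp [List.mem_finRange]
  rw [htf] at h
  exact h

end Affine

lemma applyDiffOp_zero (h : (Fin m → ℝ) → ℝ) (x : Fin m → ℝ) :
    applyDiffOp m (0 : (Fin m → ℕ) →₀ MvPolynomial (Fin m) ℝ) h x = 0 := by
  simp [applyDiffOp]

lemma pderivMulti_zero' (β : Fin m → ℕ) (hβ : ∀ i, β i = 0) (g : (Fin m → ℝ) → ℝ) :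
    pderivMulti m β g = g := by
  unfold pderivMulti
  induction (List.finRange m) with
  | nil => rfl
  | cons i l ih =>
    simp only [List.foldr_cons, hβ i]
    rw [ih]
    rfl

section Alg

variable (L : (Fin m → ℝ) →ₗ[ℝ] ℝ) (c : ℝ)

/-- the polynomial representing an affine function -/
noncomputable def affPoly : MvPolynomial (Fin m) ℝ :=
  (∑ i, C (L (Pi.single i 1)) * X i) + C c

lemma eval_affPoly (x : Fin m → ℝ) : eval x (affPoly L c) = aff L c x := by
  have hx : L x = ∑ i, x i * L (Pi.single i 1) := by
    have : x = ∑ i, x i • (Pi.single i 1 : Fin m → ℝ) := by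
      ext j; simp [Finset.sum_apply, Pi.single_apply, eq_comm]
    nth_rewrite 1 [this]
    rw [map_sum]
    simp [smul_eq_mul]
  simp [affPoly, aff, hx, mul_comm]

lemma alg (n : ℕ) : ∀ β : Fin m → ℕ, (∑ i, β i) ≤ n → ∀ p : MvPolynomial (Fin m) ℝ,
    ∃ E : (Fin m → ℕ) →₀ MvPolynomial (Fin m) ℝ, ∀ g : (Fin m → ℝ) → ℝ, ContDiff ℝ ∞ g →
      ∀ x, (aff L c x)^(n+1) * eval x p * pderivMulti m β g x =
        applyDiffOp m E (fun y => aff L c y * g y) x := by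
  induction n with
  | zero =>
    intro β hβ p
    have hβ0 : ∀ i, β i = 0 := by
      intro i
      have := Finset.sum_eq_zero_iff.1 (Nat.le_zero.1 hβ)
      exact this i (Finset.mem_univ i)
    refine ⟨Finsupp.single 0 p, fun g hg x => ?_⟩
    rw [applyDiffOp_single, pderivMulti_zero' β hβ0, pderivMulti_zero' 0 (fun _ => rfl)]
    ring
  | succ n ih =>
    intro β hβ p
    by_cases h1 : (∑ i, β i) ≤ n
    · obtain ⟨E, hE⟩ := ih β h1 (affPoly L c * p)
      refine ⟨E, fun g hg x => ?_⟩
      rw [← hE g hg x, map_mul, eval_affPoly]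
      ring
    · -- ∑ β = n + 1, in particular some β i assists
      have key : ∀ i : Fin m, ∃ Ei : (Fin m → ℕ) →₀ MvPolynomial (Fin m) ℝ,
          ∀ g : (Fin m → ℝ) → ℝ, ContDiff ℝ ∞ g → ∀ x,
            applyDiffOp m Ei (fun y => aff L c y * g y) x =
              (β i : ℝ) * L (Pi.single i 1) * ((aff L c x)^(n+1) * eval x p *
                pderivMulti m (Function.update β i (β i - 1)) g x) := by
        intro i
        rcases Nat.eq_zero_or_pos (β i) with hβi | hβi
        · exact ⟨0, fun g hg x => by simp [applyDiffOp_zero, hβi]⟩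
        · have hsum : (∑ j, Function.update β i (β i - 1) j) ≤ n := by
            rw [Finset.sum_update_of_mem (Finset.mem_univ i)]
            have h2 : (∑ j, β j) ≤ n + 1 := hβ
            have h3 : (∑ j, β j) = β i + ∑ j ∈ Finset.univ \ {i}, β j := by
              rw [← Finset.sum_update_of_mem (Finset.mem_univ i)]
              congr 1
              funext j
              rcases eq_or_ne j i with rfl | hj
              · rw [Function.update_self]
              · rw [Function.update_of_ne hj]
            omega
          obtain ⟨E', hE'⟩ := ih (Function.update β i (β i - 1)) hsum p
          refine ⟨((β i : ℝ) * L (Pi.single i 1)) • E', fun g hg x => ?_⟩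
          rw [applyDiffOp_smul, ← hE' g hg x]
      choose Efam hEfam using key
      refine ⟨Finsupp.single β (affPoly L c ^ (n+1) * p) - ∑ i, Efam i, fun g hg x => ?_⟩
      rw [applyDiffOp_sub, applyDiffOp_single, applyDiffOp_finset_sum]
      have hαg : ContDiff ℝ ∞ (fun y => aff L c y * g y) := (contDiff_aff L c).mul hg
      have hleib := congrFun (pderivMulti_aff L c β hg) x
      rw [hleib]
      have heval : eval x (affPoly L c ^ (n+1) * p) = (aff L c x)^(n+1) * eval x p := by
        rw [map_mul, map_pow, eval_affPoly]
      rw [heval]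
      have hsum : ∑ i, applyDiffOp m (Efam i) (fun y => aff L c y * g y) x =
          ∑ i, (β i : ℝ) * L (Pi.single i 1) * ((aff L c x)^(n+1) * eval x p *
            pderivMulti m (Function.update β i (β i - 1)) g x) := by
        apply Finset.sum_congr rfl
        intro i _
        exact hEfam i g hg x
      rw [hsum, mul_add, Finset.mul_sum]
      have : ∀ i : Fin m, (aff L c x)^(n+1) * eval x p *
            ((β i : ℝ) * L (Pi.single i 1) * pderivMulti m (Function.update β i (β i - 1)) g x) =
          (β i : ℝ) * L (Pi.single i 1) * ((aff L c x)^(n+1) * eval x p *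
            pderivMulti m (Function.update β i (β i - 1)) g x) := by
        intro i; ring
      rw [Finset.sum_congr rfl (fun i _ => this i)]
      ring
  end Alg

lemma oneDim (k : ℕ) : ∀ χ : ℝ → ℝ, ContDiff ℝ ∞ χ →
    ∃ t ∈ Icc (0:ℝ) 1, |χ 1| ≤ |iteratedDeriv k (fun s => s^k * χ s) t| := by
  induction k with
  | zero =>
    intro χ hχ
    exact ⟨1, by simp, by simp [iteratedDeriv_zero]⟩
  | succ k ih =>
    intro χ hχ
    set u : ℝ → ℝ := fun s => s^(k+1) * χ s with hu
    have hus : ContDiff ℝ ∞ u := (contDiff_id.pow (k+1)).mul hχ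
    have hχ' : ContDiff ℝ ∞ (deriv χ) := (contDiff_infty_iff_deriv.1 hχ).2
    set χt : ℝ → ℝ := fun s => (k+1 : ℝ) * χ s + s * deriv χ s with hχt
    have hχtc : ContDiff ℝ ∞ χt :=
      (contDiff_const.mul hχ).add (contDiff_id.mul hχ')
    have hderiv : deriv u = fun s => s^k * χt s := by
      funext s
      have h1 : HasDerivAt (fun s : ℝ => s^(k+1)) ((k+1 : ℝ) * s^k) s := by
        simpa using hasDerivAt_pow (k+1) s
      have h2 : HasDerivAt χ (deriv χ s) s :=
        ((hχ.differentiable (by simp)).differentiableAt).hasDerivAt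
      have h3 := h1.mul h2
      rw [show deriv u s = _ from h3.deriv]
      simp only [hχt]
      ring
    -- MVT on [0,1]
    have hmvt : ∃ ξ ∈ Ioo (0:ℝ) 1, deriv u ξ = (u 1 - u 0) / (1 - 0) := by
      apply exists_hasDerivAt_eq_slope u (deriv u) one_pos
      · exact (hus.continuous).continuousOn
      · intro s _
        exact ((hus.differentiable (by simp)).differentiableAt).hasDerivAt
    obtain ⟨ξ, hξ, hslope⟩ := hmvt
    have hu0 : u 0 = 0 := by simp [hu]
    have hu1 : u 1 = χ 1 := by simp [hu]
    have hχ1 : χ 1 = deriv u ξ := by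
      rw [hslope, hu0, hu1]; ring
    -- apply IH to the rescaled function
    set w : ℝ → ℝ := fun s => ξ^k * χt (ξ * s) with hw
    have hwc : ContDiff ℝ ∞ w :=
      contDiff_const.mul (hχtc.comp (contDiff_const.mul contDiff_id))
    obtain ⟨t₀, ht₀, hIH⟩ := ih w hwc
    have hkey : (fun s : ℝ => s^k * w s) = fun s => deriv u (ξ * s) := by
      funext s
      rw [hderiv, hw]
      beta_reduce
      rw [mul_pow]
      ring
    have hscale : iteratedDeriv k (fun s => deriv u (ξ * s)) t₀ =
        ξ^k * iteratedDeriv k (deriv u) (ξ * t₀) := by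
      have hdu : ContDiff ℝ k (deriv u) :=
        ((contDiff_infty_iff_deriv.1 hus).2).of_le (by exact_mod_cast le_top)
      rw [iteratedDeriv_comp_const_mul hdu ξ]
    have hiter : iteratedDeriv k (deriv u) = iteratedDeriv (k+1) u :=
      (iteratedDeriv_succ').symm
    refine ⟨ξ * t₀, ⟨mul_nonneg hξ.1.le ht₀.1,
      by nlinarith [hξ.1.le, hξ.2.le, ht₀.1, ht₀.2]⟩, ?_⟩
    have hw1 : w 1 = ξ^k * χt ξ := by simp [hw]
    have e1 : |χ 1| = |deriv u ξ| := by rw [hχ1]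
    have e2 : deriv u ξ = ξ^k * χt ξ := by rw [hderiv]
    rw [e1, e2, ← hw1]
    calc |w 1| ≤ |iteratedDeriv k (fun s => s^k * w s) t₀| := hIH
      _ = |ξ^k * iteratedDeriv (k+1) u (ξ * t₀)| := by rw [hkey, hscale, hiter]
      _ = ξ^k * |iteratedDeriv (k+1) u (ξ * t₀)| := by
          rw [abs_mul, abs_of_nonneg (pow_nonneg hξ.1.le k)]
      _ ≤ 1 * |iteratedDeriv (k+1) u (ξ * t₀)| := by
          apply mul_le_mul_of_nonneg_right _ (abs_nonneg _)
          exact pow_le_one₀ hξ.1.le hξ.2.le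
      _ = |iteratedDeriv (k+1) u (ξ * t₀)| := one_mul _

lemma contDiff_line (y₀ w : Fin m → ℝ) : ContDiff ℝ ∞ (fun t : ℝ => y₀ + t • w) :=
  contDiff_const.add (contDiff_id.smul contDiff_const)

lemma hasDerivAt_line (y₀ w : Fin m → ℝ) (t : ℝ) :
    HasDerivAt (fun t : ℝ => y₀ + t • w) w t := by
  have h1 : HasDerivAt (fun t : ℝ => t • w) ((1:ℝ) • w) t :=
    (hasDerivAt_id t).smul_const w
  simpa using h1.const_add y₀

lemma deriv_comp_line {H : (Fin m → ℝ) → ℝ} (hH : ContDiff ℝ ∞ H) (y₀ w : Fin m → ℝ) :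
    deriv (fun t : ℝ => H (y₀ + t • w)) = fun t => dvec m w H (y₀ + t • w) := by
  funext t
  have h1 : HasFDerivAt H (fderiv ℝ H (y₀ + t • w)) (y₀ + t • w) :=
    ((hH.differentiable (by simp)).differentiableAt).hasFDerivAt
  have h2 := h1.comp_hasDerivAt t (hasDerivAt_line y₀ w t)
  have h3 : HasDerivAt (fun t : ℝ => H (y₀ + t • w)) (fderiv ℝ H (y₀ + t • w) w) t := h2
  rw [h3.deriv]
  rfl

lemma iteratedDeriv_line {G : (Fin m → ℝ) → ℝ} (hG : ContDiff ℝ ∞ G) (y₀ w : Fin m → ℝ)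
    (k : ℕ) :
    iteratedDeriv k (fun t : ℝ => G (y₀ + t • w)) = fun t => dvecPowF w k G (y₀ + t • w) := by
  induction k with
  | zero => funext t; simp [iteratedDeriv_zero, dvecPowF]
  | succ k ih =>
    rw [iteratedDeriv_succ, ih]
    have : (fun t : ℝ => dvecPowF w k G (y₀ + t • w)) =
        fun t => (dvecPowF w k G) (y₀ + t • w) := rfl
    rw [this, deriv_comp_line (contDiff_dvecPowF hG w k) y₀ w]
    rfl

lemma dvecPowF_smul {G : (Fin m → ℝ) → ℝ} (hG : ContDiff ℝ ∞ G) (a : ℝ) (v : Fin m → ℝ)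
    (k : ℕ) :
    dvecPowF (a • v) k G = fun x => a^k * dvecPowF v k G x := by
  induction k with
  | zero => funext x; simp [dvecPowF]
  | succ k ih =>
    show (fun x => dvec m (a • v) (dvecPowF (a • v) k G) x) = _
    rw [ih]
    funext x
    have h1 : dvec m (a • v) (fun x => a ^ k * dvecPowF v k G x) x =
        a * dvec m v (fun x => a ^ k * dvecPowF v k G x) x := by
      simp only [dvec, map_smul, smul_eq_mul]
    rw [h1, dvec_const_mul _ _ _
      (((contDiff_dvecPowF hG v k).differentiable (by simp)).differentiableAt)]
    show a * (a ^ k * dvec m v (dvecPowF v k G) x) = a ^ (k+1) * dvec m v (dvecPowF v k G) x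
    ring

lemma coe_nnnorm_le {a b : ℝ} (h : |a| ≤ |b|) : (‖a‖₊ : ℝ≥0∞) ≤ (‖b‖₊ : ℝ≥0∞) := by
  apply ENNReal.coe_le_coe.2
  rw [← NNReal.coe_le_coe, coe_nnnorm, coe_nnnorm, Real.norm_eq_abs, Real.norm_eq_abs]
  exact h

lemma analytic (L : (Fin m → ℝ) →ₗ[ℝ] ℝ) (c : ℝ) (v : Fin m → ℝ) (hv : L v = 1) (k : ℕ)
    {F : (Fin m → ℝ) → ℝ} (hF : ContDiff ℝ ∞ F) (y : Fin m → ℝ) :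
    (‖F y‖₊ : ℝ≥0∞) ≤
      ⨆ z : Fin m → ℝ, (‖dvecPowF v k (fun x => (aff L c x)^k * F x) z‖₊ : ℝ≥0∞) := by
  set G := fun x => (aff L c x)^k * F x with hGdef
  have hG : ContDiff ℝ ∞ G := ((contDiff_aff L c).pow k).mul hF
  set M := ⨆ z : Fin m → ℝ, (‖dvecPowF v k G z‖₊ : ℝ≥0∞) with hM
  have hgood : ∀ y : Fin m → ℝ, aff L c y ≠ 0 → (‖F y‖₊ : ℝ≥0∞) ≤ M := by
    intro y hy
    set a := aff L c y with ha
    set y₀ := y - a • v with hy₀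
    set χ := fun t : ℝ => a^k * F (y₀ + t • (a • v)) with hχ
    have hχc : ContDiff ℝ ∞ χ := contDiff_const.mul (hF.comp (contDiff_line y₀ (a • v)))
    obtain ⟨t, ht, hineq⟩ := oneDim k χ hχc
    have haffline : ∀ t : ℝ, aff L c (y₀ + t • (a • v)) = t * a := by
      intro t
      rw [aff]
      beta_reduce
      rw [hy₀, map_add, map_sub, map_smul, map_smul, map_smul, hv]
      rw [ha, aff]
      simp only [smul_eq_mul]
      ring
    have key1 : (fun s : ℝ => s^k * χ s) = fun t => G (y₀ + t • (a • v)) := by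
      funext s
      rw [hGdef]
      beta_reduce
      rw [haffline s, hχ]
      beta_reduce
      rw [mul_pow]
      ring
    have key2 : χ 1 = a^k * F y := by
      rw [hχ]
      beta_reduce
      congr 2
      rw [hy₀]
      simp
    rw [key1, iteratedDeriv_line hG y₀ (a • v) k, dvecPowF_smul hG a v k] at hineq
    rw [key2] at hineq
    beta_reduce at hineq
    set z := y₀ + t • (a • v) with hz
    rw [abs_mul, abs_mul, abs_pow] at hineq
    have hapos : 0 < |a|^k := pow_pos (abs_pos.2 hy) k
    have hineq2 : |F y| ≤ |dvecPowF v k G z| := le_of_mul_le_mul_left hineq hapos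
    calc (‖F y‖₊ : ℝ≥0∞) ≤ (‖dvecPowF v k G z‖₊ : ℝ≥0∞) := coe_nnnorm_le hineq2
      _ ≤ M := le_iSup (fun z => (‖dvecPowF v k G z‖₊ : ℝ≥0∞)) z
  by_cases hy : aff L c y ≠ 0
  · exact hgood y hy
  · push_neg at hy
    have haffn : ∀ n : ℕ, aff L c (y + (1/(n+1) : ℝ) • v) = 1/(n+1) := by
      intro n
      rw [aff]
      beta_reduce
      rw [map_add, map_smul, hv]
      have : L y + c = 0 := hy
      rw [smul_eq_mul, mul_one]
      linarith
    have hbound : ∀ n : ℕ, (‖F (y + (1/(n+1) : ℝ) • v)‖₊ : ℝ≥0∞) ≤ M := by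
      intro n
      apply hgood
      rw [haffn n]
      positivity
    have hseq : Filter.Tendsto (fun n : ℕ => y + (1/(n+1) : ℝ) • v) Filter.atTop (nhds y) := by
      have h0 : Filter.Tendsto (fun n : ℕ => (1/(n+1) : ℝ)) Filter.atTop (nhds 0) :=
        tendsto_one_div_add_atTop_nhds_zero_nat
      have h1 : Filter.Tendsto (fun n : ℕ => y + (1/(n+1) : ℝ) • v) Filter.atTop
          (nhds (y + (0:ℝ) • v)) :=
        Filter.Tendsto.add tendsto_const_nhds (h0.smul_const v)
      simpa using h1
    have hlim : Filter.Tendsto (fun n : ℕ => (‖F (y + (1/(n+1) : ℝ) • v)‖₊ : ℝ≥0∞))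
        Filter.atTop (nhds (‖F y‖₊ : ℝ≥0∞)) := by
      apply ENNReal.tendsto_coe.2
      exact (continuous_nnnorm.tendsto _).comp ((hF.continuous.tendsto y).comp hseq)
    exact le_of_tendsto' hlim hbound

lemma pderivMulti_const_mul {g : (Fin m → ℝ) → ℝ} (hg : ContDiff ℝ ∞ g) (c' : ℝ)
    (β : Fin m → ℕ) :
    pderivMulti m β (fun x => c' * g x) = fun x => c' * pderivMulti m β g x := by
  unfold pderivMulti
  induction (List.finRange m) with
  | nil => rfl
  | cons i l ih =>
    simp only [List.foldr_cons]
    rw [ih, pderivPow_const_mul' (contDiff_foldD l β hg) c' i (β i)]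

/-- The core lemma : for a single nonzero affine factor. -/
lemma core (L : (Fin m → ℝ) →ₗ[ℝ] ℝ) (c : ℝ) (hLc : ∃ y, aff L c y ≠ 0)
    (D : (Fin m → ℕ) →₀ MvPolynomial (Fin m) ℝ) :
    ∃ (k : ℕ) (E : Fin k → ((Fin m → ℕ) →₀ MvPolynomial (Fin m) ℝ)),
      ∀ g : (Fin m → ℝ) → ℝ, ContDiff ℝ ∞ g →
        (⨆ y : Fin m → ℝ, (‖applyDiffOp m D g y‖₊ : ℝ≥0∞)) ≤
          ∑ l : Fin k, ⨆ y : Fin m → ℝ,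
            (‖applyDiffOp m (E l) (fun z => aff L c z * g z) y‖₊ : ℝ≥0∞) := by
  classical
  by_cases hL : ∃ v₀, L v₀ ≠ 0
  · -- the linear part is nonzero
    obtain ⟨v₀, hv₀⟩ := hL
    set v := (L v₀)⁻¹ • v₀ with hvdef
    have hv : L v = 1 := by
      rw [hvdef, map_smul, smul_eq_mul, inv_mul_cancel₀ hv₀]
    set s := D.support with hs
    -- operators from the algebraic lemma
    have key : ∀ β : Fin m → ℕ, ∃ Eβ : (Fin m → ℕ) →₀ MvPolynomial (Fin m) ℝ,
        ∀ g : (Fin m → ℝ) → ℝ, ContDiff ℝ ∞ g → ∀ x,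
          (aff L c x)^((∑ i, β i)+1) * eval x (D β) * pderivMulti m β g x =
            applyDiffOp m Eβ (fun y => aff L c y * g y) x :=
      fun β => alg L c (∑ i, β i) β le_rfl (D β)
    choose Efun hEfun using key
    set E' : (Fin m → ℕ) → ((Fin m → ℕ) →₀ MvPolynomial (Fin m) ℝ) :=
      fun β => (dOpV v)^[(∑ i, β i)+1] (Efun β) with hE'
    refine ⟨s.card, fun l => E' (↑(s.equivFin.symm l)), fun g hg => ?_⟩
    set αg := fun z => aff L c z * g z with hαg
    have hαgc : ContDiff ℝ ∞ αg := (contDiff_aff L c).mul hg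
    have hW : ∑ l : Fin s.card, (⨆ y : Fin m → ℝ,
        (‖applyDiffOp m (E' (↑(s.equivFin.symm l))) αg y‖₊ : ℝ≥0∞)) =
        ∑ β ∈ s, ⨆ y : Fin m → ℝ, (‖applyDiffOp m (E' β) αg y‖₊ : ℝ≥0∞) := by
      rw [← Finset.sum_coe_sort s (fun β => ⨆ y : Fin m → ℝ,
        (‖applyDiffOp m (E' β) αg y‖₊ : ℝ≥0∞))]
      exact (Fintype.sum_equiv s.equivFin _ _ (fun x => by rw [Equiv.symm_apply_apply])).symm
    rw [hW]
    -- pointwise triangle inequality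
    have step1 : (⨆ y : Fin m → ℝ, (‖applyDiffOp m D g y‖₊ : ℝ≥0∞)) ≤
        ∑ β ∈ s, ⨆ y : Fin m → ℝ, (‖eval y (D β) * pderivMulti m β g y‖₊ : ℝ≥0∞) := by
      apply iSup_le
      intro y
      calc (‖applyDiffOp m D g y‖₊ : ℝ≥0∞) ≤
          ∑ β ∈ s, (‖eval y (D β) * pderivMulti m β g y‖₊ : ℝ≥0∞) := by
            rw [applyDiffOp, ← ENNReal.coe_finset_sum]
            exact ENNReal.coe_le_coe.2 (nnnorm_sum_le s _)
        _ ≤ ∑ β ∈ s, ⨆ y : Fin m → ℝ, (‖eval y (D β) * pderivMulti m β g y‖₊ : ℝ≥0∞) :=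
            Finset.sum_le_sum (fun β _ => le_iSup (fun y => (‖eval y (D β) *
              pderivMulti m β g y‖₊ : ℝ≥0∞)) y)
    refine le_trans step1 (Finset.sum_le_sum ?_)
    intro β _
    set n := ∑ i, β i with hn
    set Fβ := fun y => eval y (D β) * pderivMulti m β g y with hFβ
    have hFβc : ContDiff ℝ ∞ Fβ := (contDiff_evalP (D β)).mul (contDiff_pderivMulti hg β)
    have hGeq : (fun x => (aff L c x)^(n+1) * Fβ x) = applyDiffOp m (Efun β) αg := by
      funext x
      rw [hFβ]
      beta_reduce
      rw [← mul_assoc]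
      exact hEfun β g hg x
    apply iSup_le
    intro y
    calc (‖Fβ y‖₊ : ℝ≥0∞) ≤ ⨆ z : Fin m → ℝ,
        (‖dvecPowF v (n+1) (fun x => (aff L c x)^(n+1) * Fβ x) z‖₊ : ℝ≥0∞) :=
          analytic L c v hv (n+1) hFβc y
      _ = ⨆ z : Fin m → ℝ, (‖applyDiffOp m (E' β) αg z‖₊ : ℝ≥0∞) := by
          congr 1
          funext z
          rw [hGeq, hE']
          beta_reduce
          rw [applyDiffOp_dOpV_iter v (Efun β) hαgc (n+1)]
  · -- the linear part vanishes : α is a nonzero constant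
    push_neg at hL
    obtain ⟨y₀, hy₀⟩ := hLc
    have hc : c ≠ 0 := by
      intro hc0
      apply hy₀
      rw [aff, hL y₀, hc0]
      ring
    refine ⟨1, fun _ => c⁻¹ • D, fun g hg => ?_⟩
    have heq : ∀ y, applyDiffOp m (c⁻¹ • D) (fun z => aff L c z * g z) y =
        applyDiffOp m D g y := by
      intro y
      have hfun : (fun z => aff L c z * g z) = fun z => c * g z := by
        funext z
        rw [aff, hL z]
        ring
      rw [hfun, applyDiffOp_smul]
      have : applyDiffOp m D (fun z => c * g z) y = c * applyDiffOp m D g y := by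
        rw [applyDiffOp, applyDiffOp, Finset.mul_sum]
        apply Finset.sum_congr rfl
        intro β _
        rw [pderivMulti_const_mul hg c β]
        ring
      rw [this, ← mul_assoc, inv_mul_cancel₀ hc, one_mul]
    rw [Fin.sum_univ_one]
    apply iSup_le
    intro y
    rw [← heq y]
    exact le_iSup (fun y => (‖applyDiffOp m (c⁻¹ • D)
      (fun z => aff L c z * g z) y‖₊ : ℝ≥0∞)) y

lemma contDiff_finprod {ι : Type*} (s : Finset ι) (f : ι → ((Fin m → ℝ) → ℝ))
    (hf : ∀ i ∈ s, ContDiff ℝ ∞ (f i)) :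
    ContDiff ℝ ∞ (fun z => ∏ i ∈ s, f i z) := by
  classical
  induction s using Finset.induction_on with
  | empty => simpa using contDiff_const
  | @insert a s' ha ih =>
    simp only [Finset.prod_insert ha]
    exact (hf a (by simp)).mul (ih (fun i hi => hf i (by simp [hi])))

lemma main (d : ℕ) (βf : Fin d → ((Fin m → ℝ) → ℝ))
    (haff : ∀ b, ∃ (L : (Fin m → ℝ) →ₗ[ℝ] ℝ) (c : ℝ), ∀ y, βf b y = L y + c)
    (hne : ∀ b, ∃ y, βf b y ≠ 0)
    (D : (Fin m → ℕ) →₀ MvPolynomial (Fin m) ℝ) :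
    ∃ (k : ℕ) (E : Fin k → ((Fin m → ℕ) →₀ MvPolynomial (Fin m) ℝ)),
      ∀ h : (Fin m → ℝ) → ℝ, ContDiff ℝ ∞ h →
        (⨆ y : Fin m → ℝ, (‖applyDiffOp m D h y‖₊ : ℝ≥0∞)) ≤
          ∑ l : Fin k, ⨆ y : Fin m → ℝ,
            (‖applyDiffOp m (E l) (fun z => h z * ∏ b, βf b z) y‖₊ : ℝ≥0∞) := by
  classical
  induction d generalizing D with
  | zero =>
    refine ⟨1, fun _ => D, fun h hh => ?_⟩
    have hfun : (fun z => h z * ∏ b : Fin 0, βf b z) = h := by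
      funext z; simp
    rw [Fin.sum_univ_one, hfun]
  | succ d ih =>
    set βf' : Fin d → ((Fin m → ℝ) → ℝ) := fun b => βf b.castSucc with hβf'
    obtain ⟨k, E, hE⟩ := ih βf' (fun b => haff b.castSucc) (fun b => hne b.castSucc) D
    obtain ⟨L, c, hLc⟩ := haff (Fin.last d)
    have hlast : βf (Fin.last d) = aff L c := funext hLc
    have hlastne : ∃ y, aff L c y ≠ 0 := by
      obtain ⟨y, hy⟩ := hne (Fin.last d)
      exact ⟨y, by rwa [← hlast]⟩
    have hcore : ∀ l : Fin k, ∃ (k' : ℕ)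
        (E' : Fin k' → ((Fin m → ℕ) →₀ MvPolynomial (Fin m) ℝ)),
        ∀ g : (Fin m → ℝ) → ℝ, ContDiff ℝ ∞ g →
          (⨆ y : Fin m → ℝ, (‖applyDiffOp m (E l) g y‖₊ : ℝ≥0∞)) ≤
            ∑ j : Fin k', ⨆ y : Fin m → ℝ,
              (‖applyDiffOp m (E' j) (fun z => aff L c z * g z) y‖₊ : ℝ≥0∞) :=
      fun l => core L c hlastne (E l)
    choose kf Ef hEf using hcore
    set σ := (Σ l : Fin k, Fin (kf l))
    let e : σ ≃ Fin (Fintype.card σ) := Fintype.equivFin σ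
    refine ⟨Fintype.card σ, fun i => Ef (e.symm i).1 (e.symm i).2, fun h hh => ?_⟩
    have hfac : ∀ b : Fin (d+1), ContDiff ℝ ∞ (βf b) := by
      intro b
      obtain ⟨L', c', hL'⟩ := haff b
      have : βf b = aff L' c' := funext hL'
      rw [this]
      exact contDiff_aff L' c'
    have hprod : ContDiff ℝ ∞ (fun z => ∏ b, βf' b z) :=
      contDiff_finprod Finset.univ βf' (fun b _ => hfac b.castSucc)
    set g := fun z => h z * ∏ b, βf' b z with hg
    have hgc : ContDiff ℝ ∞ g := hh.mul hprod
    have hfun : (fun z => aff L c z * g z) = fun z => h z * ∏ b, βf b z := by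
      funext z
      rw [hg]
      beta_reduce
      rw [Fin.prod_univ_castSucc (f := fun b => βf b z), hlast]
      show aff L c z * (h z * ∏ b : Fin d, βf' b z) =
        h z * ((∏ b : Fin d, βf' b z) * aff L c z)
      ring
    calc (⨆ y : Fin m → ℝ, (‖applyDiffOp m D h y‖₊ : ℝ≥0∞)) ≤
        ∑ l : Fin k, ⨆ y : Fin m → ℝ, (‖applyDiffOp m (E l) g y‖₊ : ℝ≥0∞) := hE h hh
      _ ≤ ∑ l : Fin k, ∑ j : Fin (kf l), ⨆ y : Fin m → ℝ,
          (‖applyDiffOp m (Ef l j) (fun z => aff L c z * g z) y‖₊ : ℝ≥0∞) :=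
          Finset.sum_le_sum (fun l _ => hEf l g hgc)
      _ = ∑ p : σ, ⨆ y : Fin m → ℝ,
          (‖applyDiffOp m (Ef p.1 p.2) (fun z => aff L c z * g z) y‖₊ : ℝ≥0∞) := by
          rw [← Finset.univ_sigma_univ, Finset.sum_sigma]
      _ = ∑ i : Fin (Fintype.card σ), ⨆ y : Fin m → ℝ,
          (‖applyDiffOp m (Ef (e.symm i).1 (e.symm i).2)
            (fun z => aff L c z * g z) y‖₊ : ℝ≥0∞) :=
          Fintype.sum_equiv e _ _ (fun p => by rw [Equiv.symm_apply_apply])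
      _ = ∑ i : Fin (Fintype.card σ), ⨆ y : Fin m → ℝ,
          (‖applyDiffOp m (Ef (e.symm i).1 (e.symm i).2)
            (fun z => h z * ∏ b, βf b z) y‖₊ : ℝ≥0∞) := by rw [hfun]

end S19

/-- Let `m ≥ 1` and let `β₁, …, β_d` be nonzero real affine functions on
`ℝ^m`. For every differential operator `D` with polynomial coefficients on `ℝ^m` there exist
finitely many such operators `D'₁, …, D'_k` so that for every smooth `h : ℝ^m → ℝ`,
`sup_y |Dh(y)| ≤ ∑_l sup_y |D'_l H(y)|` where `H(y) = h(y) ∏_b β_b(y)`, the suprema being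
taken in `[0, ∞]`. -/
theorem stmt_19 (m : ℕ) (hm : 1 ≤ m) (d : ℕ) (β : Fin d → ((Fin m → ℝ) → ℝ))
    (hβaff : ∀ b, ∃ (L : (Fin m → ℝ) →ₗ[ℝ] ℝ) (c : ℝ), ∀ y, β b y = L y + c)
    (hβne : ∀ b, ∃ y, β b y ≠ 0)
    (D : (Fin m → ℕ) →₀ MvPolynomial (Fin m) ℝ) :
    ∃ (k : ℕ) (D' : Fin k → ((Fin m → ℕ) →₀ MvPolynomial (Fin m) ℝ)),
      ∀ h : (Fin m → ℝ) → ℝ, ContDiff ℝ (⊤ : ℕ∞) h →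
        (⨆ y : Fin m → ℝ, (‖applyDiffOp m D h y‖₊ : ℝ≥0∞)) ≤
          ∑ l : Fin k, ⨆ y : Fin m → ℝ,
            (‖applyDiffOp m (D' l) (fun z => h z * ∏ b, β b z) y‖₊ : ℝ≥0∞) := by
  obtain ⟨k, E, hE⟩ := S19.main d β hβaff hβne D
  exact ⟨k, E, fun h hh => hE h (hh.of_le (by simp))⟩
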